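/- arXiv:2401.00302 — 3 statements merged into one kernel-verified Lean document; each statement's English description precedes it below -/
import Mathlib

section
/- For every limit ordinal γ and every m ∈ ℕ, the posets ⟨P(γ + m), ⊆⟩ and ⟨P(γ), ⊆⟩ are order-isomorphic; an isomorphism is given by C ↦ C ∪ {γ, γ+1, …, γ+m−1}. -/
/-!
A self-embedding `g` of a well order satisfies `x ≤ g x`, so it fixes every point of a finite
final segment: going downwards, if `g x > x` then `g (g x) = g x`, contradicting injectivity.
Hence every self-embedding of `γ + m` is the identity on `[γ, γ + m)` and restricts to a
self-embedding of `γ`, while every self-embedding of `γ` extends by the identity.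
-/

open Ordinal Set

/-- The set of copies of an ordinal `a`: subsets of the interval `[0, a)` that are
ranges of order-embeddings of `Iio a` into itself. -/
def Copies (a : Ordinal) : Set (Set Ordinal) :=
  {A | ∃ f : Set.Iio a ↪o Set.Iio a, A = Subtype.val '' Set.range ⇑f}

theorem OrderEmbedding.apply_eq_self_of_isUpperSet {α : Type*} [LinearOrder α] [WellFoundedLT α]
    (g : α ↪o α) {s : Set α} (hs : IsUpperSet s) (hfin : s.Finite) {x : α} (hx : x ∈ s) :
    g x = x := by
  refine (hfin.wellFoundedOn (r := (· > ·))).induction hx (P := fun y => g y = y) fun y hy ih => ?_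
  rcases g.strictMono.le_apply.eq_or_lt with h | h
  · exact h.symm
  · exact g.injective (ih _ (hs h.le hy) h)

theorem Ordinal.Ico_add_natCast (γ : Ordinal) (m : ℕ) :
    Ico γ (γ + m) = (fun i : ℕ => γ + i) '' Iio m := by
  ext x
  constructor
  · rintro ⟨hγx, hx⟩
    obtain ⟨d, rfl⟩ := exists_add_of_le hγx
    have hd : d < m := (add_lt_add_iff_left γ).1 hx
    obtain ⟨i, rfl⟩ := lt_omega0.1 (hd.trans (natCast_lt_omega0 m))
    exact ⟨i, by exact_mod_cast hd, rfl⟩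
  · rintro ⟨i, hi, rfl⟩
    exact ⟨le_self_add, (add_lt_add_iff_left γ).2 (by exact_mod_cast hi)⟩

namespace Copies

variable {γ δ : Ordinal} {A C : Set Ordinal}

theorem subset_Iio (hA : A ∈ Copies δ) : A ⊆ Iio δ := by
  obtain ⟨f, rfl⟩ := hA
  rintro _ ⟨y, -, rfl⟩
  exact y.2

theorem apply_eq_self_of_le (hfin : (Ico γ δ).Finite) (g : Iio δ ↪o Iio δ) {x : Iio δ}
    (hx : γ ≤ x.1) : g x = x := by
  have hs : IsUpperSet {x : Iio δ | γ ≤ x.1} := fun _ _ hab (ha : γ ≤ _) => ha.trans hab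
  exact g.apply_eq_self_of_isUpperSet hs
    ((hfin.preimage Subtype.val_injective.injOn).subset fun y hy => ⟨hy, y.2⟩) hx

theorem Ico_subset (hfin : (Ico γ δ).Finite) (hA : A ∈ Copies δ) : Ico γ δ ⊆ A := by
  obtain ⟨g, rfl⟩ := hA
  intro x hx
  exact ⟨g ⟨x, hx.2⟩, mem_range_self _, congrArg Subtype.val (apply_eq_self_of_le hfin g hx.1)⟩

theorem apply_lt_iff (hfin : (Ico γ δ).Finite) (g : Iio δ ↪o Iio δ) {x : Iio δ} :
    (g x).1 < γ ↔ x.1 < γ := by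
  constructor
  · intro hgx
    by_contra! hx
    rw [apply_eq_self_of_le hfin g hx] at hgx
    exact hx.not_gt hgx
  · intro hx
    by_contra! hgx
    rw [g.injective (apply_eq_self_of_le hfin g hgx)] at hgx
    exact hgx.not_gt hx

theorem inter_Iio_mem (hγδ : γ ≤ δ) (hfin : (Ico γ δ).Finite) (hA : A ∈ Copies δ) :
    A ∩ Iio γ ∈ Copies γ := by
  obtain ⟨g, rfl⟩ := hA
  let f : Iio γ → Iio γ := fun x => ⟨g ⟨x, x.2.trans_le hγδ⟩, (apply_lt_iff hfin g).2 x.2⟩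
  refine ⟨OrderEmbedding.ofStrictMono f fun x y hxy => g.strictMono hxy, ?_⟩
  ext y
  constructor
  · rintro ⟨⟨_, ⟨x, rfl⟩, rfl⟩, hy⟩
    exact ⟨_, mem_range_self ⟨x, (apply_lt_iff hfin g).1 hy⟩, rfl⟩
  · rintro ⟨_, ⟨x, rfl⟩, rfl⟩
    exact ⟨⟨_, mem_range_self _, rfl⟩, (f x).2⟩

theorem union_Ico_mem (hγδ : γ ≤ δ) (hC : C ∈ Copies γ) : C ∪ Ico γ δ ∈ Copies δ := by
  obtain ⟨f, rfl⟩ := hC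
  let g : Iio δ → Iio δ := fun x =>
    if h : x.1 < γ then ⟨f ⟨x, h⟩, (f ⟨x, h⟩).2.trans_le hγδ⟩ else x
  have hg_lt {x : Iio δ} (h : x.1 < γ) : (g x).1 = f ⟨x, h⟩ := by simp only [g, dif_pos h]
  have hg_ge {x : Iio δ} (h : ¬x.1 < γ) : g x = x := dif_neg h
  have hg : StrictMono g := by
    intro x y hxy
    rw [← Subtype.coe_lt_coe]
    by_cases hy : y.1 < γ
    · have hx : x.1 < γ := lt_trans hxy hy
      rw [hg_lt hx, hg_lt hy]
      exact f.strictMono hxy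
    · rw [hg_ge hy]
      by_cases hx : x.1 < γ
      · rw [hg_lt hx]
        exact (f _).2.trans_le (not_lt.1 hy)
      · rwa [hg_ge hx]
  refine ⟨OrderEmbedding.ofStrictMono g hg, ?_⟩
  ext y
  constructor
  · rintro (⟨_, ⟨x, rfl⟩, rfl⟩ | hy)
    · exact ⟨_, mem_range_self ⟨x, x.2.trans_le hγδ⟩, hg_lt x.2⟩
    · exact ⟨_, mem_range_self ⟨y, hy.2⟩, congrArg Subtype.val (hg_ge hy.1.not_gt)⟩
  · rintro ⟨_, ⟨x, rfl⟩, rfl⟩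
    by_cases hx : x.1 < γ
    · exact Or.inl ⟨_, mem_range_self ⟨x, hx⟩, (hg_lt hx).symm⟩
    · right
      change (g x).1 ∈ Ico γ δ
      rw [hg_ge hx]
      exact ⟨not_lt.1 hx, x.2⟩

theorem disjoint_Ico (hC : C ∈ Copies γ) : Disjoint C (Ico γ δ) :=
  disjoint_left.2 fun _ hx hx' => hx'.1.not_gt (subset_Iio hC hx)

def unionIcoOrderIso (hγδ : γ ≤ δ) (hfin : (Ico γ δ).Finite) : Copies γ ≃o Copies δ where
  toFun C := ⟨C ∪ Ico γ δ, union_Ico_mem hγδ C.2⟩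
  invFun A := ⟨A ∩ Iio γ, inter_Iio_mem hγδ hfin A.2⟩
  left_inv C := by
    apply Subtype.ext
    change ((C : Set Ordinal) ∪ Ico γ δ) ∩ Iio γ = C
    have hIco : Ico γ δ ∩ Iio γ = ∅ := (disjoint_left.2 fun _ hx hx' => hx.1.not_gt hx').inter_eq
    rw [union_inter_distrib_right, inter_eq_left.2 (subset_Iio C.2), hIco, union_empty]
  right_inv A := by
    apply Subtype.ext
    change (A : Set Ordinal) ∩ Iio γ ∪ Ico γ δ = A
    ext x
    constructor
    · rintro (⟨hx, -⟩ | hx)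
      exacts [hx, Ico_subset hfin A.2 hx]
    · intro hx
      by_cases h : x < γ
      exacts [Or.inl ⟨hx, h⟩, Or.inr ⟨not_lt.1 h, subset_Iio A.2 hx⟩]
  map_rel_iff' {C C'} := by
    change (C : Set Ordinal) ∪ Ico γ δ ⊆ C' ∪ Ico γ δ ↔ (C : Set Ordinal) ⊆ C'
    refine ⟨fun h x hx => (h (Or.inl hx)).resolve_right (disjoint_left.1 (disjoint_Ico C.2) hx),
      fun h => union_subset_union_left _ h⟩

theorem coe_unionIcoOrderIso (hγδ : γ ≤ δ) (hfin : (Ico γ δ).Finite) (C : Copies γ) :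
    (unionIcoOrderIso hγδ hfin C : Set Ordinal) = (C : Set Ordinal) ∪ Ico γ δ :=
  rfl

end Copies

theorem stmt2_general (γ : Ordinal) (m : ℕ) :
    ∃ e : ↥(Copies γ) ≃o ↥(Copies (γ + m)),
      ∀ C : ↥(Copies γ),
        (e C : Set Ordinal) = (C : Set Ordinal) ∪ {b | ∃ i : ℕ, i < m ∧ b = γ + i} := by
  have hIco : Ico γ (γ + m) = (fun i : ℕ => γ + i) '' Iio m := Ordinal.Ico_add_natCast γ m
  refine ⟨Copies.unionIcoOrderIso le_self_add (hIco ▸ (finite_Iio m).image _), fun C => ?_⟩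
  rw [Copies.coe_unionIcoOrderIso, hIco]
  congr 1
  ext b
  simp [eq_comm]

/-- For every limit ordinal `γ` and every `m ∈ ℕ`, the posets `⟨P(γ+m), ⊆⟩` and
`⟨P(γ), ⊆⟩` are order-isomorphic, via `C ↦ C ∪ {γ, γ+1, …, γ+m-1}`. -/
theorem stmt2 (γ : Ordinal) (hγ : Order.IsSuccLimit γ) (m : ℕ) :
    ∃ e : ↥(Copies γ) ≃o ↥(Copies (γ + m)),
      ∀ C : ↥(Copies γ),
        (e C : Set Ordinal) = (C : Set Ordinal) ∪ {b | ∃ i : ℕ, i < m ∧ b = γ + i} :=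
  stmt2_general γ m
end

section
/- For every limit ordinal γ and every m ∈ ℕ, P(γ + m) = { C ∪ {γ + i : i < m} : C ∈ P(γ) }; that is, a subset A ⊆ γ + m is a copy of γ + m if and only if A contains all ordinals γ, γ+1, …, γ+m−1 and A ∩ γ is a copy of γ. -/
/-!
An order-embedding `f` of an ordinal into itself satisfies `x ≤ f x`. Hence if `f` maps
`Iio (succ c)` into itself then `f c = c`, and `f` maps `Iio c` into itself. Starting from the
top of `γ + m` and descending `m` steps, an embedding of `γ + m` fixes every `γ + i` and
restricts to an embedding of `γ`; conversely an embedding of `γ` extends to `γ + m` by the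
identity on `[γ, γ + m)`.
-/

open Ordinal Set

def PreservesIio {a : Ordinal} (f : Iio a ↪o Iio a) (b : Ordinal) : Prop :=
  ∀ x : Iio a, x.1 < b → (f x).1 < b

namespace PreservesIio

variable {a c : Ordinal} {f : Iio a ↪o Iio a}

lemma self (f : Iio a ↪o Iio a) : PreservesIio f a := fun x _ => (f x).2

lemma apply_eq (hc : c < a) (hf : PreservesIio f (Order.succ c)) : (f ⟨c, hc⟩).1 = c :=
  le_antisymm (Order.lt_succ_iff.mp (hf ⟨c, hc⟩ (Order.lt_succ c))) f.strictMono.le_apply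

lemma of_succ (hc : c < a) (hf : PreservesIio f (Order.succ c)) : PreservesIio f c :=
  fun x hx => (hf.apply_eq hc).le.trans_lt' (f.lt_iff_lt.mpr (show x < ⟨c, hc⟩ from hx))

lemma of_add_natCast {n : ℕ} (hn : c + n ≤ a) (hf : PreservesIio f (c + n)) :
    PreservesIio f c := by
  induction n with
  | zero => simpa using hf
  | succ n ih =>
    rw [Nat.cast_succ, ← add_assoc, ← Order.succ_eq_add_one] at hn hf
    exact ih ((Order.le_succ _).trans hn) (hf.of_succ (Order.succ_le_iff.mp hn))

end PreservesIio

section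

variable {a b : Ordinal}

lemma subset_Iio_of_mem_copies {A : Set Ordinal} (hA : A ∈ Copies a) : A ⊆ Iio a := by
  obtain ⟨f, rfl⟩ := hA
  rintro _ ⟨y, -, rfl⟩
  exact y.2

lemma union_Ico_mem_copies {C : Set Ordinal} (hba : b ≤ a) (hC : C ∈ Copies b) :
    C ∪ Ico b a ∈ Copies a := by
  classical
  obtain ⟨g, rfl⟩ := hC
  let F : Iio a → Iio a := fun x =>
    if h : x.1 < b then ⟨g ⟨x, h⟩, (g ⟨x, h⟩).2.trans_le hba⟩ else x
  have hF_lt {x : Iio a} (hx : x.1 < b) : (F x).1 = g ⟨x, hx⟩ := by simp [F, hx]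
  have hF_ge {x : Iio a} (hx : ¬ x.1 < b) : F x = x := by simp [F, hx]
  have hF : StrictMono F := by
    intro x y hxy
    rw [← Subtype.coe_lt_coe]
    by_cases hy : y.1 < b
    · have hx : x.1 < b := lt_trans hxy hy
      rw [hF_lt hx, hF_lt hy, Subtype.coe_lt_coe, g.lt_iff_lt]
      exact hxy
    · rw [hF_ge hy]
      by_cases hx : x.1 < b
      · rw [hF_lt hx]
        exact (g ⟨x, hx⟩).2.trans_le (not_lt.mp hy)
      · rw [hF_ge hx]
        exact hxy
  refine ⟨OrderEmbedding.ofStrictMono F hF, ?_⟩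
  ext z
  simp only [mem_union, mem_image, mem_range, OrderEmbedding.coe_ofStrictMono, mem_Ico]
  constructor
  · rintro (⟨_, ⟨x, rfl⟩, rfl⟩ | ⟨hbz, hza⟩)
    · exact ⟨_, ⟨⟨x, x.2.trans_le hba⟩, rfl⟩, hF_lt x.2⟩
    · exact ⟨_, ⟨⟨z, hza⟩, rfl⟩, congrArg Subtype.val (hF_ge (not_lt.mpr hbz))⟩
  · rintro ⟨_, ⟨x, rfl⟩, rfl⟩
    by_cases hx : x.1 < b
    · exact Or.inl ⟨_, ⟨⟨x, hx⟩, rfl⟩, (hF_lt hx).symm⟩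
    · rw [hF_ge hx]
      exact Or.inr ⟨not_lt.mp hx, x.2⟩

lemma inter_Iio_mem_copies {f : Iio a ↪o Iio a} (hba : b ≤ a) (hf : PreservesIio f b) :
    Subtype.val '' range f ∩ Iio b ∈ Copies b := by
  let g : Iio b → Iio b := fun x => ⟨f ⟨x, x.2.trans_le hba⟩, hf _ x.2⟩
  have hg : StrictMono g := fun x y hxy =>
    f.strictMono (show (⟨x, _⟩ : Iio a) < ⟨y, _⟩ from hxy)
  refine ⟨OrderEmbedding.ofStrictMono g hg, ?_⟩
  ext z
  simp only [mem_inter_iff, mem_image, mem_range, OrderEmbedding.coe_ofStrictMono, mem_Iio]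
  constructor
  · rintro ⟨⟨_, ⟨x, rfl⟩, rfl⟩, hfx⟩
    have hx : x.1 < b := lt_of_not_ge fun hbx => (hbx.trans f.strictMono.le_apply).not_gt hfx
    exact ⟨_, ⟨⟨x, hx⟩, rfl⟩, rfl⟩
  · rintro ⟨_, ⟨x, rfl⟩, rfl⟩
    exact ⟨⟨_, ⟨_, rfl⟩, rfl⟩, (g x).2⟩

end

lemma Ico_self_add_natCast (γ : Ordinal) (m : ℕ) :
    Ico γ (γ + m) = {b | ∃ i : ℕ, i < m ∧ b = γ + i} := by
  ext b
  constructor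
  · rintro ⟨hγb, hb⟩
    rw [← Ordinal.add_sub_cancel_of_le hγb, add_lt_add_iff_left] at hb
    obtain ⟨n, hn⟩ := Ordinal.lt_omega0.mp (hb.trans (Ordinal.natCast_lt_omega0 m))
    rw [hn, Nat.cast_lt] at hb
    exact ⟨n, hb, by rw [← hn, Ordinal.add_sub_cancel_of_le hγb]⟩
  · rintro ⟨i, hi, rfl⟩
    exact ⟨le_self_add, by gcongr⟩

lemma inter_Iio_union_Ico_eq {α : Type*} [LinearOrder α] {A : Set α} {a b : α}
    (hA : A ⊆ Iio a) (hIco : Ico b a ⊆ A) : A ∩ Iio b ∪ Ico b a = A := by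
  refine subset_antisymm (union_subset inter_subset_left hIco) fun z hz => ?_
  by_cases hzb : z < b
  · exact Or.inl ⟨hz, hzb⟩
  · exact Or.inr ⟨not_lt.mp hzb, hA hz⟩

lemma mem_copies_add_natCast_iff {γ : Ordinal} {m : ℕ} {A : Set Ordinal}
    (hA : A ⊆ Iio (γ + m)) :
    A ∈ Copies (γ + m) ↔ Ico γ (γ + m) ⊆ A ∧ A ∩ Iio γ ∈ Copies γ := by
  constructor
  · rintro ⟨f, rfl⟩
    refine ⟨fun z hz => ?_, inter_Iio_mem_copies le_self_add (.of_add_natCast le_rfl (.self f))⟩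
    obtain ⟨i, hi, rfl⟩ := Ico_self_add_natCast γ m ▸ hz
    have hsucc : Order.succ (γ + i) + ↑(m - (i + 1)) = γ + m := by
      rw [Order.succ_eq_add_one, add_assoc, add_assoc, ← Nat.cast_one, ← Nat.cast_add,
        ← Nat.cast_add]
      congr 2
      omega
    have hf : PreservesIio f (Order.succ (γ + i)) :=
      .of_add_natCast hsucc.le (by rw [hsucc]; exact .self f)
    exact ⟨_, ⟨_, rfl⟩, hf.apply_eq hz.2⟩
  · rintro ⟨hIco, hC⟩
    rw [← inter_Iio_union_Ico_eq hA hIco]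
    exact union_Ico_mem_copies le_self_add hC

theorem stmt3_general (γ : Ordinal) (m : ℕ) :
    Copies (γ + m) =
      (fun C : Set Ordinal => C ∪ {b | ∃ i : ℕ, i < m ∧ b = γ + i}) '' Copies γ ∧
    (∀ A : Set Ordinal, A ⊆ Set.Iio (γ + m) →
      (A ∈ Copies (γ + m) ↔
        {b | ∃ i : ℕ, i < m ∧ b = γ + i} ⊆ A ∧ A ∩ Set.Iio γ ∈ Copies γ)) := by
  simp only [← Ico_self_add_natCast]
  refine ⟨Set.ext fun A => ⟨fun hA => ?_, ?_⟩, fun A => mem_copies_add_natCast_iff⟩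
  · have hsub := subset_Iio_of_mem_copies hA
    obtain ⟨hIco, hC⟩ := (mem_copies_add_natCast_iff hsub).mp hA
    exact ⟨_, hC, inter_Iio_union_Ico_eq hsub hIco⟩
  · rintro ⟨C, hC, rfl⟩
    exact union_Ico_mem_copies le_self_add hC

/-- For every limit ordinal `γ` and `m ∈ ℕ`,
`P(γ+m) = { C ∪ {γ+i : i < m} : C ∈ P(γ) }`; that is, `A ⊆ γ+m` is a copy of `γ+m`
iff `A` contains all `γ+i` (`i < m`) and `A ∩ γ` is a copy of `γ`. -/
theorem stmt3 (γ : Ordinal) (hγ : Order.IsSuccLimit γ) (m : ℕ) :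
    Copies (γ + m) =
      (fun C : Set Ordinal => C ∪ {b | ∃ i : ℕ, i < m ∧ b = γ + i}) '' Copies γ ∧
    (∀ A : Set Ordinal, A ⊆ Set.Iio (γ + m) →
      (A ∈ Copies (γ + m) ↔
        {b | ∃ i : ℕ, i < m ∧ b = γ + i} ⊆ A ∧ A ∩ Set.Iio γ ∈ Copies γ)) :=
  stmt3_general γ m
end

section
/- Let δ > 0 be an ordinal, let I be a linear order with |I| < cf(ω^δ), and let L = Σ_{i∈I} L_i be the lexicographic sum of linear orders L_i over I. If ω^δ order-embeds into L, then ω^δ order-embeds into L_i for some i ∈ I. -/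
/-!
The first coordinate of an embedding `f : ω ^ δ ↪o Σₗ i, L i` is monotone. Since `#I < cf(ω ^ δ)`,
the suprema of the `#I` many bounded fibres cannot exhaust `ω ^ δ`, so some fibre is cofinal and, by
monotonicity, `f` takes values in a single summand `L i` above some `x₀`. As `ω ^ δ` is additively
principal, `a ↦ x₀ + a` embeds `ω ^ δ` into `[x₀, ω ^ δ)`, and composing with `f` lands in `L i`.
-/

open Ordinal Set Cardinal

universe u

namespace Sigma.Lex

variable {ι : Type*} {α : ι → Type*} [Preorder ι]

theorem monotone_fst [∀ i, Preorder (α i)] : Monotone fun p : Σₗ i, α i => p.1 :=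
  fun _ _ h => (le_def.1 h).elim le_of_lt fun ⟨h, _⟩ => h.le

theorem le_iff_of_fst_eq [∀ i, LE (α i)] {i : ι} {p q : Σₗ i, α i} (hp : p.1 = i)
    (hq : q.1 = i) : p ≤ q ↔ hp ▸ p.2 ≤ hq ▸ q.2 := by
  rw [le_def]
  obtain ⟨j, a⟩ := p
  obtain ⟨k, b⟩ := q
  dsimp only at hp hq
  subst hp hq
  simp

end Sigma.Lex

def OrderEmbedding.sigmaLexCodRestrict {β ι : Type*} {α : ι → Type*} [PartialOrder β] [Preorder ι]
    [∀ i, Preorder (α i)] (g : β ↪o Σₗ j, α j) (i : ι) (hg : ∀ b, (g b).1 = i) : β ↪o α i :=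
  OrderEmbedding.ofMapLEIff (fun b => hg b ▸ (g b).2) fun a b =>
    (Sigma.Lex.le_iff_of_fst_eq (hg a) (hg b)).symm.trans g.le_iff_le

namespace Ordinal

noncomputable def IsPrincipal.addLeftIio {o : Ordinal} (ho : IsPrincipal (· + ·) o) (x : Iio o) :
    Iio o ↪o Iio o :=
  OrderEmbedding.ofStrictMono (fun a => ⟨x + a, ho x.2 a.2⟩) fun _ _ h =>
    Subtype.mk_lt_mk.2 ((add_lt_add_iff_left _).2 h)

theorem IsPrincipal.le_addLeftIio {o : Ordinal} (ho : IsPrincipal (· + ·) o) (x a : Iio o) :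
    x ≤ ho.addLeftIio x a :=
  show (x : Ordinal) ≤ x + a from le_self_add

theorem exists_cofinal_fiber {o : Ordinal.{u}} {ι : Type u} (hι : #ι < o.cof) (g : Iio o → ι) :
    ∃ i, ∀ a, ∃ b, a ≤ b ∧ g b = i := by
  by_contra! hbounded
  choose b hb using hbounded
  have hsup : (⨆ i, (b i : Ordinal)) < o := iSup_lt_of_lt_cof hι fun i => (b i).2
  exact hb (g ⟨_, hsup⟩) ⟨_, hsup⟩ (Ordinal.le_iSup _ _) rfl

theorem exists_forall_ge_eq_of_monotone {o : Ordinal.{u}} {ι : Type u} [PartialOrder ι]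
    (hι : #ι < o.cof) {g : Iio o → ι} (hg : Monotone g) : ∃ a i, ∀ b, a ≤ b → g b = i := by
  have ho : 0 < o := cof_pos.1 (pos_of_gt hι)
  obtain ⟨i, hi⟩ := exists_cofinal_fiber hι g
  obtain ⟨a, -, ha⟩ := hi ⟨0, ho⟩
  refine ⟨a, i, fun b hab => ?_⟩
  obtain ⟨c, hbc, hc⟩ := hi b
  exact le_antisymm (hc ▸ hg hbc) (ha ▸ hg hab)

end Ordinal

theorem stmt9_general (δ : Ordinal.{u}) (I : Type u) [LinearOrder I]
    (L : I → Type u) [∀ i, LinearOrder (L i)]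
    (hI : Cardinal.mk I < (ω ^ δ).cof)
    (h : Nonempty (↥(Set.Iio (ω ^ δ)) ↪o (Σₗ i : I, L i))) :
    ∃ i : I, Nonempty (↥(Set.Iio (ω ^ δ)) ↪o L i) := by
  obtain ⟨f⟩ := h
  obtain ⟨x₀, i, hi⟩ := exists_forall_ge_eq_of_monotone hI (Sigma.Lex.monotone_fst.comp f.monotone)
  have hω := isPrincipal_add_omega0_opow δ
  exact ⟨i, ⟨OrderEmbedding.sigmaLexCodRestrict ((hω.addLeftIio x₀).trans f) i
    fun a => hi _ (hω.le_addLeftIio x₀ a)⟩⟩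

/-- Let `δ > 0`, let `I` be a linear order with `|I| < cf(ω^δ)`, and let
`L = Σ_{i∈I} L_i` be a lexicographic sum of linear orders. If `ω^δ` order-embeds
into `L`, then it order-embeds into some summand `L_i`. -/
theorem stmt9 (δ : Ordinal.{u}) (hδ : 0 < δ) (I : Type u) [LinearOrder I]
    (L : I → Type u) [∀ i, LinearOrder (L i)]
    (hI : Cardinal.mk I < (ω ^ δ).cof)
    (h : Nonempty (↥(Set.Iio (ω ^ δ)) ↪o (Σₗ i : I, L i))) :
    ∃ i : I, Nonempty (↥(Set.Iio (ω ^ δ)) ↪o L i) :=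
  stmt9_general δ I L hI h
end
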